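/- arXiv:1601.05766 — 6 statements merged into one kernel-verified Lean document; each statement's English description precedes it below -/
import Mathlib

section
/- For the function h(t) = (1+t)log(1+t) − t on [0,∞), its inverse h⁻¹ satisfies h⁻¹(t) ≤ √(2t) + 3t for all t ≥ 0. Equivalently, for all t ≥ 0, h(√(2t) + 3t) ≥ t. -/
/-!
The Padé bound `log (1 + u) ≥ 2u / (u + 2)` gives `h u ≥ u² / (u + 2)`. For `u = s + 3t` with
`s² = 2t` one has `u² - t (u + 2) = 5st + 6t² ≥ 0`.
-/

open Real

lemma sq_div_add_two_le_one_add_mul_log_sub {u : ℝ} (hu : 0 ≤ u) :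
    u ^ 2 / (u + 2) ≤ (1 + u) * log (1 + u) - u := by
  have hlog : (1 + u) * (2 * u / (u + 2)) ≤ (1 + u) * log (1 + u) :=
    mul_le_mul_of_nonneg_left (le_log_one_add_of_nonneg hu) (by linarith)
  have hid : (1 + u) * (2 * u / (u + 2)) - u = u ^ 2 / (u + 2) := by
    field_simp
    ring
  linarith

lemma le_sq_div_add_two_of_sq_eq {s t : ℝ} (hs : 0 ≤ s) (ht : 0 ≤ t) (hst : s ^ 2 = 2 * t) :
    t ≤ (s + 3 * t) ^ 2 / (s + 3 * t + 2) := by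
  rw [le_div_iff₀ (by positivity)]
  nlinarith [mul_nonneg hs ht, sq_nonneg t]

/-- For `h(t) = (1+t)log(1+t) − t`, one has `h⁻¹(t) ≤ √(2t) + 3t`,
equivalently `h(√(2t) + 3t) ≥ t` for all `t ≥ 0`. -/
theorem stmt5 (t : ℝ) (ht : 0 ≤ t) :
    t ≤ (1 + (Real.sqrt (2 * t) + 3 * t)) *
          Real.log (1 + (Real.sqrt (2 * t) + 3 * t)) -
        (Real.sqrt (2 * t) + 3 * t) :=
  (le_sq_div_add_two_of_sq_eq (sqrt_nonneg _) ht (sq_sqrt (by positivity))).trans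
    (sq_div_add_two_le_one_add_mul_log_sub (by positivity))
end

section
/- Let a ∈ [−∞,∞), b ∈ (−∞,∞] with a ≤ b, and y ∈ ℝⁿ. Let θ* be the Euclidean projection of y onto the cone 𝒮ₙ↑ of nondecreasing sequences, and let θ be the Euclidean projection of y onto 𝒮ₙ↑(a,b) = {v ∈ 𝒮ₙ↑ : a ≤ v₁, vₙ ≤ b}. Then the number of constant pieces satisfies k(θ) ≤ k(θ*). -/
/-!
Let `π` be the nearest-point map of the interval `s = [a, b] ∩ ℝ`. The variational inequality
`(x - π x)(v - π x) ≤ 0` for `v ∈ s` makes `π` firmly nonexpansive, hence monotone and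
`1`-Lipschitz, so `θ* - t (π ∘ θ*)` is nondecreasing for `t ∈ [0, 1]`. Together with the first-order
conditions of `θ*` on the cone this gives `⟨y - θ*, π ∘ θ*⟩ = 0` and then
`⟨y - π ∘ θ*, v - π ∘ θ*⟩ ≤ 0` for every feasible `v`, so `π ∘ θ*` is the constrained projection.
By uniqueness `θ = π ∘ θ*`, and applying `π` to the values of `θ*` can only merge them.
-/

open Finset

section LeastSquares

variable {ι : Type*} [Fintype ι] {S : Set (ι → ℝ)} {y θ : ι → ℝ}

theorem sum_sq_sub_add_smul (y θ w : ι → ℝ) (t : ℝ) :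
    ∑ i, (y i - (θ + t • w) i) ^ 2 =
      ∑ i, (y i - θ i) ^ 2 - 2 * t * ∑ i, (y i - θ i) * w i + t ^ 2 * ∑ i, w i ^ 2 := by
  simp only [Pi.add_apply, Pi.smul_apply, smul_eq_mul, mul_sum, ← sum_sub_distrib,
    ← sum_add_distrib]
  exact sum_congr rfl fun i _ => by ring

theorem sum_mul_nonpos_of_isMinOn {w : ι → ℝ}
    (hθ : IsMinOn (fun v => ∑ i, (y i - v i) ^ 2) S θ)
    (hw : ∀ t : ℝ, 0 < t → t ≤ 1 → θ + t • w ∈ S) :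
    ∑ i, (y i - θ i) * w i ≤ 0 := by
  set P := ∑ i, (y i - θ i) * w i
  set Q := ∑ i, w i ^ 2
  have hQ : 0 ≤ Q := sum_nonneg fun i _ => sq_nonneg _
  have key : ∀ t : ℝ, 0 < t → t ≤ 1 → 2 * t * P ≤ t ^ 2 * Q := fun t ht₀ ht₁ => by
    have := isMinOn_iff.mp hθ _ (hw t ht₀ ht₁)
    rw [sum_sq_sub_add_smul] at this
    linarith
  by_contra! hP
  set t := min 1 (P / (Q + 1))
  have ht₀ : 0 < t := lt_min one_pos (by positivity)
  have htQ : t * (Q + 1) ≤ P := (le_div_iff₀ (by positivity)).mp (min_le_right _ _)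
  nlinarith [key t ht₀ (min_le_left _ _)]

theorem isMinOn_of_sum_mul_nonpos
    (hθ : ∀ v ∈ S, ∑ i, (y i - θ i) * (v i - θ i) ≤ 0) :
    IsMinOn (fun v => ∑ i, (y i - v i) ^ 2) S θ := by
  refine isMinOn_iff.mpr fun v hv => ?_
  have hexp : ∑ i, (y i - v i) ^ 2 = ∑ i, (y i - θ i) ^ 2
      - 2 * ∑ i, (y i - θ i) * (v i - θ i) + ∑ i, (v i - θ i) ^ 2 := by
    rw [mul_sum, ← sum_sub_distrib, ← sum_add_distrib]
    exact sum_congr rfl fun i _ => by ring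
  have := sum_nonneg fun i (_ : i ∈ univ) => sq_nonneg (v i - θ i)
  simp only [hexp]
  linarith [hθ v hv]

theorem eq_of_isMinOn_of_convex {θ' : ι → ℝ} (hS : Convex ℝ S) (hθS : θ ∈ S) (hθ'S : θ' ∈ S)
    (hθ : IsMinOn (fun v => ∑ i, (y i - v i) ^ 2) S θ)
    (hθ' : IsMinOn (fun v => ∑ i, (y i - v i) ^ 2) S θ') : θ = θ' := by
  have h₁ := sum_mul_nonpos_of_isMinOn hθ fun t ht₀ ht₁ =>
    hS.add_smul_sub_mem hθS hθ'S ⟨ht₀.le, ht₁⟩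
  have h₂ := sum_mul_nonpos_of_isMinOn hθ' fun t ht₀ ht₁ =>
    hS.add_smul_sub_mem hθ'S hθS ⟨ht₀.le, ht₁⟩
  have hsum : ∑ i, (θ i - θ' i) ^ 2 = 0 := by
    refine le_antisymm ?_ (sum_nonneg fun i _ => sq_nonneg _)
    have : ∑ i, (θ i - θ' i) ^ 2 = ∑ i, (y i - θ i) * (θ' - θ) i
        + ∑ i, (y i - θ' i) * (θ - θ') i := by
      rw [← sum_add_distrib]
      exact sum_congr rfl fun i _ => by simp only [Pi.sub_apply]; ring
    linarith
  funext i
  have := (sum_eq_zero_iff_of_nonneg fun i _ => sq_nonneg (θ i - θ' i)).mp hsum i (mem_univ i)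
  exact sub_eq_zero.mp (pow_eq_zero_iff two_ne_zero |>.mp this)

end LeastSquares

/-- `f` is the nearest-point map of `s ⊆ ℝ`, in its variational form. -/
def IsProjOn (s : Set ℝ) (f : ℝ → ℝ) : Prop :=
  ∀ x, f x ∈ s ∧ ∀ v ∈ s, (x - f x) * (v - f x) ≤ 0

namespace IsProjOn

variable {s : Set ℝ} {f : ℝ → ℝ}

theorem sq_sub_le_mul_sub (hf : IsProjOn s f) (x z : ℝ) :
    (f z - f x) ^ 2 ≤ (z - x) * (f z - f x) := by
  have h₁ := (hf x).2 (f z) (hf z).1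
  have h₂ := (hf z).2 (f x) (hf x).1
  nlinarith

theorem monotone (hf : IsProjOn s f) : Monotone f := fun x z hxz => by
  nlinarith [hf.sq_sub_le_mul_sub x z]

theorem sub_le_sub (hf : IsProjOn s f) {x z : ℝ} (hxz : x ≤ z) : f z - f x ≤ z - x := by
  nlinarith [hf.sq_sub_le_mul_sub x z, hf.monotone hxz]

theorem monotone_sub_mul (hf : IsProjOn s f) {t : ℝ} (ht₀ : 0 ≤ t) (ht₁ : t ≤ 1) :
    Monotone fun x => x - t * f x := fun x z hxz => by
  nlinarith [hf.sub_le_sub hxz, hf.monotone hxz]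

end IsProjOn

theorem exists_isProjOn {s : Set ℝ} (hne : s.Nonempty) (hclosed : IsClosed s)
    (hconv : Convex ℝ s) : ∃ f, IsProjOn s f := by
  have := fun x => exists_norm_eq_iInf_of_complete_convex hne hclosed.isComplete hconv x
  choose f hfs hf using this
  refine ⟨f, fun x => ⟨hfs x, fun v hv => ?_⟩⟩
  have := (norm_eq_iInf_iff_real_inner_le_zero hconv (hfs x)).mp (hf x) v hv
  simpa [mul_comm] using this

section Isotonic

variable {ι : Type*} [Preorder ι] {s : Set ℝ} {f : ℝ → ℝ}

theorem convex_setOf_monotone_forall_mem (hs : Convex ℝ s) :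
    Convex ℝ {v : ι → ℝ | Monotone v ∧ ∀ i, v i ∈ s} := by
  intro u hu v hv a b ha hb hab
  refine ⟨fun i j hij => ?_, fun i => hs (hu.2 i) (hv.2 i) ha hb hab⟩
  simp only [Pi.add_apply, Pi.smul_apply, smul_eq_mul]
  gcongr
  exacts [hu.1 hij, hv.1 hij]

variable [Fintype ι] {y θ : ι → ℝ}

theorem sum_mul_nonpos_of_monotone {v : ι → ℝ} (hθ : Monotone θ)
    (hmin : IsMinOn (fun v => ∑ i, (y i - v i) ^ 2) {v | Monotone v} θ) (hv : Monotone v) :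
    ∑ i, (y i - θ i) * v i ≤ 0 :=
  sum_mul_nonpos_of_isMinOn hmin fun _ ht₀ _ => hθ.add (hv.const_smul ht₀.le)

theorem sum_mul_comp_eq_zero (hf : IsProjOn s f) (hθ : Monotone θ)
    (hmin : IsMinOn (fun v => ∑ i, (y i - v i) ^ 2) {v | Monotone v} θ) :
    ∑ i, (y i - θ i) * f (θ i) = 0 := by
  refine le_antisymm (sum_mul_nonpos_of_monotone hθ hmin (hf.monotone.comp hθ)) ?_
  have := sum_mul_nonpos_of_isMinOn (w := -(f ∘ θ)) hmin fun t ht₀ ht₁ => by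
    have hcomp : θ + t • -(f ∘ θ) = (fun x => x - t * f x) ∘ θ := by
      ext i
      simp [sub_eq_add_neg]
    exact hcomp ▸ (hf.monotone_sub_mul ht₀.le ht₁).comp hθ
  simpa [sum_neg_distrib] using this

theorem isMinOn_comp (hf : IsProjOn s f) (hθ : Monotone θ)
    (hmin : IsMinOn (fun v => ∑ i, (y i - v i) ^ 2) {v | Monotone v} θ) :
    IsMinOn (fun v => ∑ i, (y i - v i) ^ 2) {v | Monotone v ∧ ∀ i, v i ∈ s} (f ∘ θ) := by
  refine isMinOn_of_sum_mul_nonpos fun v ⟨hv, hvs⟩ => ?_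
  have hsplit : ∑ i, (y i - f (θ i)) * (v i - f (θ i)) = ∑ i, (y i - θ i) * v i
      - ∑ i, (y i - θ i) * f (θ i) + ∑ i, (θ i - f (θ i)) * (v i - f (θ i)) := by
    rw [← sum_sub_distrib, ← sum_add_distrib]
    exact sum_congr rfl fun i _ => by ring
  have hproj : ∑ i, (θ i - f (θ i)) * (v i - f (θ i)) ≤ 0 :=
    sum_nonpos fun i _ => (hf (θ i)).2 _ (hvs i)
  simp only [Function.comp_apply, hsplit, sum_mul_comp_eq_zero hf hθ hmin]
  linarith [sum_mul_nonpos_of_monotone hθ hmin hv]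

theorem eq_comp_of_isMinOn (hs : Convex ℝ s) (hf : IsProjOn s f) (hθ : Monotone θ)
    (hmin : IsMinOn (fun v => ∑ i, (y i - v i) ^ 2) {v | Monotone v} θ) {θ' : ι → ℝ}
    (hθ' : θ' ∈ {v : ι → ℝ | Monotone v ∧ ∀ i, v i ∈ s})
    (hmin' : IsMinOn (fun v => ∑ i, (y i - v i) ^ 2) {v | Monotone v ∧ ∀ i, v i ∈ s} θ') :
    θ' = f ∘ θ :=
  eq_of_isMinOn_of_convex (convex_setOf_monotone_forall_mem hs) hθ'
    ⟨hf.monotone.comp hθ, fun i => (hf (θ i)).1⟩ hmin' (isMinOn_comp hf hθ hmin)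

end Isotonic

theorem Monotone.forall_mem_Icc_iff {ι α : Type*} [Preorder ι] [BoundedOrder ι] [Preorder α]
    {v : ι → α} (hv : Monotone v) {a b : α} :
    (∀ i, v i ∈ Set.Icc a b) ↔ a ≤ v ⊥ ∧ v ⊤ ≤ b :=
  ⟨fun h => ⟨(h ⊥).1, (h ⊤).2⟩, fun h _ => ⟨h.1.trans (hv bot_le), (hv le_top).trans h.2⟩⟩

theorem stmt6_general (n : ℕ) (a b : EReal)
    (y θstar θ : Fin (n + 1) → ℝ)
    (hθstar : Monotone θstar ∧ ∀ v : Fin (n + 1) → ℝ, Monotone v →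
      ∑ i, (y i - θstar i) ^ 2 ≤ ∑ i, (y i - v i) ^ 2)
    (hθ : (Monotone θ ∧ a ≤ (θ 0 : EReal) ∧ (θ (Fin.last n) : EReal) ≤ b) ∧
      ∀ v : Fin (n + 1) → ℝ, Monotone v → a ≤ (v 0 : EReal) →
        (v (Fin.last n) : EReal) ≤ b →
        ∑ i, (y i - θ i) ^ 2 ≤ ∑ i, (y i - v i) ^ 2) :
    (Finset.univ.image θ).card ≤ (Finset.univ.image θstar).card := by
  set s := ((↑) : ℝ → EReal) ⁻¹' Set.Icc a b
  have hmem : ∀ v : Fin (n + 1) → ℝ, Monotone v →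
      ((∀ i, v i ∈ s) ↔ a ≤ (v 0 : EReal) ∧ (v (Fin.last n) : EReal) ≤ b) := fun v hv =>
    (EReal.coe_strictMono.monotone.comp hv).forall_mem_Icc_iff
  have hθs : ∀ i, θ i ∈ s := (hmem θ hθ.1.1).mpr hθ.1.2
  have hs : Convex ℝ s := (Set.ordConnected_Icc.preimage_mono EReal.coe_strictMono.monotone).convex
  obtain ⟨f, hf⟩ := exists_isProjOn ⟨θ 0, hθs 0⟩
    (isClosed_Icc.preimage continuous_coe_real_ereal) hs
  have hθ_min : IsMinOn (fun v => ∑ i, (y i - v i) ^ 2) {v | Monotone v ∧ ∀ i, v i ∈ s} θ :=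
    isMinOn_iff.mpr fun v ⟨hv, hvs⟩ => hθ.2 v hv ((hmem v hv).mp hvs).1 ((hmem v hv).mp hvs).2
  have hθ_eq : θ = f ∘ θstar :=
    eq_comp_of_isMinOn hs hf hθstar.1 (isMinOn_iff.mpr hθstar.2) ⟨hθ.1.1, hθs⟩ hθ_min
  rw [hθ_eq, ← Finset.image_image]
  exact Finset.card_image_le

/-- Projecting onto the cone of nondecreasing sequences with boundary
constraints `a ≤ v₁` and `vₙ ≤ b` (with `a ∈ [−∞,∞)`, `b ∈ (−∞,∞]`, `a ≤ b`)
produces a vector with at most as many constant pieces as the projection onto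
the unconstrained cone of nondecreasing sequences. -/
theorem stmt6 (n : ℕ) (a b : EReal) (ha : a ≠ ⊤) (hb : b ≠ ⊥) (hab : a ≤ b)
    (y θstar θ : Fin (n + 1) → ℝ)
    (hθstar : Monotone θstar ∧ ∀ v : Fin (n + 1) → ℝ, Monotone v →
      ∑ i, (y i - θstar i) ^ 2 ≤ ∑ i, (y i - v i) ^ 2)
    (hθ : (Monotone θ ∧ a ≤ (θ 0 : EReal) ∧ (θ (Fin.last n) : EReal) ≤ b) ∧
      ∀ v : Fin (n + 1) → ℝ, Monotone v → a ≤ (v 0 : EReal) →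
        (v (Fin.last n) : EReal) ≤ b →
        ∑ i, (y i - θ i) ^ 2 ≤ ∑ i, (y i - v i) ^ 2) :
    (Finset.univ.image θ).card ≤ (Finset.univ.image θstar).card :=
  stmt6_general n a b y θstar θ hθstar hθ
end

section
/- With the notation of the bounded isotonic projection lemma: if θ* is the projection of y onto 𝒮ₙ↑ and a ≤ b, let T_a = {i : θ*ᵢ ≤ a}, T_b = {i : θ*ᵢ ≥ b}, T_c = {i : a < θ*ᵢ < b}. Then the projection θ of y onto 𝒮ₙ↑(a,b) is given by θᵢ = a for i ∈ T_a, θᵢ = θ*ᵢ for i ∈ T_c, and θᵢ = b for i ∈ T_b. -/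
/-!
A point `φ` of a set `K` is the least-squares projection of `y` onto `K` as soon as
`⟪y - φ, u - φ⟫ ≤ 0` for every `u ∈ K`, and this forces uniqueness. For the truncation
`φ = max a (min b θ*)` and a bounded monotone `u` write
`⟪y - φ, u - φ⟫ = ⟪y - θ*, u - θ*⟫ + ⟪y - θ*, θ* - φ⟫ + ⟪θ* - φ, u - φ⟫`.
The first two terms are nonpositive by the optimality of `θ*` on the monotone cone, since
`θ* + (θ* - φ)` is monotone (`x ↦ x - max a (min b x)` is nondecreasing); the last one is
nonpositive coordinatewise because `a ≤ u ≤ b`.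
-/

open Finset

section LeastSquares

variable {ι : Type*} [Fintype ι]

theorem sum_sq_sub_add_smul_sub (y θ v : ι → ℝ) (t : ℝ) :
    ∑ i, (y i - (θ i + t * (v i - θ i))) ^ 2 =
      ∑ i, (y i - θ i) ^ 2 - 2 * t * ∑ i, (y i - θ i) * (v i - θ i)
        + t ^ 2 * ∑ i, (v i - θ i) ^ 2 := by
  simp only [mul_sum, ← sum_sub_distrib, ← sum_add_distrib]
  exact sum_congr rfl fun i _ => by ring

theorem sum_mul_sub_nonpos_of_forall_sum_sq_le {K : Set (ι → ℝ)} (hK : Convex ℝ K)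
    {y θ v : ι → ℝ} (hθ : θ ∈ K) (hv : v ∈ K)
    (hmin : ∀ w ∈ K, ∑ i, (y i - θ i) ^ 2 ≤ ∑ i, (y i - w i) ^ 2) :
    ∑ i, (y i - θ i) * (v i - θ i) ≤ 0 := by
  set S := ∑ i, (y i - θ i) * (v i - θ i)
  set Q := ∑ i, (v i - θ i) ^ 2
  have hQ : 0 ≤ Q := sum_nonneg fun i _ => sq_nonneg _
  by_contra! hS
  -- a step of length `t ≤ S / (Q + 1)` from `θ` towards `v` would lower the objective by `2tS - t²Q`
  set t := min 1 (S / (Q + 1))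
  have ht₀ : 0 < t := lt_min one_pos (by positivity)
  have htQ : t * Q ≤ S := calc
    t * Q ≤ S / (Q + 1) * (Q + 1) := by
      gcongr
      · exact min_le_right _ _
      · linarith
    _ = S := div_mul_cancel₀ _ (by positivity)
  have hw := hmin _ (hK.add_smul_sub_mem hθ hv ⟨ht₀.le, min_le_left _ _⟩)
  simp only [Pi.add_apply, Pi.smul_apply, Pi.sub_apply, smul_eq_mul,
    sum_sq_sub_add_smul_sub] at hw
  nlinarith

theorem sum_sq_sub_add_sum_sq_sub_le {y φ v : ι → ℝ}
    (h : ∑ i, (y i - φ i) * (v i - φ i) ≤ 0) :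
    ∑ i, (y i - φ i) ^ 2 + ∑ i, (v i - φ i) ^ 2 ≤ ∑ i, (y i - v i) ^ 2 := by
  have := sum_sq_sub_add_smul_sub y φ v 1
  simp only [one_mul, one_pow, add_sub_cancel] at this
  linarith

theorem eq_of_sum_mul_sub_nonpos_of_sum_sq_le {y φ θ : ι → ℝ}
    (hφ : ∑ i, (y i - φ i) * (θ i - φ i) ≤ 0)
    (hθ : ∑ i, (y i - θ i) ^ 2 ≤ ∑ i, (y i - φ i) ^ 2) : θ = φ := by
  have hle := sum_sq_sub_add_sum_sq_sub_le hφ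
  have hzero : ∑ i, (θ i - φ i) ^ 2 = 0 :=
    le_antisymm (by linarith) (sum_nonneg fun i _ => sq_nonneg _)
  funext i
  have := (sum_eq_zero_iff_of_nonneg fun j _ => sq_nonneg (θ j - φ j)).mp hzero i (mem_univ i)
  exact sub_eq_zero.mp (pow_eq_zero_iff two_ne_zero |>.mp this)

end LeastSquares

theorem convex_setOf_monotone {ι : Type*} [Preorder ι] :
    Convex ℝ {v : ι → ℝ | Monotone v} := by
  intro u hu v hv s t hs ht _ i j hij
  simp only [Pi.add_apply, Pi.smul_apply, smul_eq_mul]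
  gcongr
  exacts [hu hij, hv hij]

theorem monotone_sub_max_min (a b : ℝ) : Monotone fun x : ℝ => x - max a (min b x) := by
  intro x y hxy
  simp only [max_def, min_def]
  split_ifs <;> linarith

theorem mul_sub_max_min_nonpos {a b u : ℝ} (x : ℝ) (ha : a ≤ u) (hb : u ≤ b) :
    (x - max a (min b x)) * (u - max a (min b x)) ≤ 0 := by
  rcases le_total x a with hxa | hax
  · rw [min_eq_right (hxa.trans (ha.trans hb)), max_eq_left hxa]
    exact mul_nonpos_of_nonpos_of_nonneg (by linarith) (by linarith)
  rcases le_total b x with hbx | hxb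
  · rw [min_eq_left hbx, max_eq_right (ha.trans hb)]
    exact mul_nonpos_of_nonneg_of_nonpos (by linarith) (by linarith)
  · rw [min_eq_right hxb, max_eq_right hax, sub_self, zero_mul]

theorem sum_mul_sub_max_min_nonpos {ι : Type*} [Preorder ι] [Fintype ι] {a b : ℝ}
    {y θ u : ι → ℝ} (hθ : Monotone θ)
    (hθmin : ∀ v : ι → ℝ, Monotone v → ∑ i, (y i - θ i) * (v i - θ i) ≤ 0)
    (hu : Monotone u) (hua : ∀ i, a ≤ u i) (hub : ∀ i, u i ≤ b) :
    ∑ i, (y i - max a (min b (θ i))) * (u i - max a (min b (θ i))) ≤ 0 := by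
  set φ := fun i => max a (min b (θ i))
  have h₁ := hθmin u hu
  have h₂ := hθmin (fun i => θ i + (θ i - φ i))
    (hθ.add ((monotone_sub_max_min a b).comp hθ))
  have h₃ : ∑ i, (θ i - φ i) * (u i - φ i) ≤ 0 :=
    sum_nonpos fun i _ => mul_sub_max_min_nonpos (θ i) (hua i) (hub i)
  have split : ∑ i, (y i - φ i) * (u i - φ i) = ∑ i, (y i - θ i) * (u i - θ i)
      + ∑ i, (y i - θ i) * ((θ i + (θ i - φ i)) - θ i) + ∑ i, (θ i - φ i) * (u i - φ i) := by
    simp only [← sum_add_distrib]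
    exact sum_congr rfl fun i _ => by ring
  linarith

/-- Explicit formula for the projection onto the cone of nondecreasing
sequences with boundary constraints: it is obtained from the unconstrained
isotonic projection `θ*` by truncation at levels `a` and `b`. -/
theorem stmt7 (n : ℕ) (a b : ℝ) (hab : a ≤ b) (y θstar θ : Fin (n + 1) → ℝ)
    (hθstar : Monotone θstar ∧ ∀ v : Fin (n + 1) → ℝ, Monotone v →
      ∑ i, (y i - θstar i) ^ 2 ≤ ∑ i, (y i - v i) ^ 2)
    (hθ : (Monotone θ ∧ a ≤ θ 0 ∧ θ (Fin.last n) ≤ b) ∧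
      ∀ v : Fin (n + 1) → ℝ, Monotone v → a ≤ v 0 → v (Fin.last n) ≤ b →
        ∑ i, (y i - θ i) ^ 2 ≤ ∑ i, (y i - v i) ^ 2) :
    ∀ i, (θstar i ≤ a → θ i = a) ∧ (b ≤ θstar i → θ i = b) ∧
      (a < θstar i → θstar i < b → θ i = θstar i) := by
  obtain ⟨hmono, hmin⟩ := hθstar
  obtain ⟨⟨hθm, hθa, hθb⟩, hθmin⟩ := hθ
  have hVI (v : Fin (n + 1) → ℝ) (hv : Monotone v) :
      ∑ i, (y i - θstar i) * (v i - θstar i) ≤ 0 :=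
    sum_mul_sub_nonpos_of_forall_sum_sq_le convex_setOf_monotone hmono hv hmin
  have hφm : Monotone fun i => max a (min b (θstar i)) := fun i j hij =>
    max_le_max le_rfl (min_le_min le_rfl (hmono hij))
  have hθφ : θ = fun i => max a (min b (θstar i)) :=
    eq_of_sum_mul_sub_nonpos_of_sum_sq_le
      (sum_mul_sub_max_min_nonpos hmono hVI hθm
        (fun i => hθa.trans (hθm (Fin.zero_le i))) (fun i => (hθm (Fin.le_last i)).trans hθb))
      (hθmin _ hφm (le_max_left _ _) (max_le hab (min_le_left _ _)))
  intro i
  rw [congrFun hθφ i]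
  refine ⟨fun h => ?_, fun h => ?_, fun h₁ h₂ => ?_⟩
  · rw [min_eq_right (h.trans hab), max_eq_left h]
  · rw [min_eq_left h, max_eq_right hab]
  · rw [min_eq_right h₂.le, max_eq_right h₁.le]
end

section
/- Let y = μ + ξ with μ ∈ K for a closed convex set K ⊆ ℝⁿ, and let μ̂ = Π_K(y). Suppose T₁,...,T_m is a partition of {1,...,n} and for each j, C_j ⊆ ℝ^{|T_j|} is a closed convex cone containing (μ̂ − μ)_{T_j}. Then ‖μ̂ − μ‖² ≤ Σ_{j=1}^m ‖Π_{C_j}(ξ_{T_j})‖² (Euclidean norms). -/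
/-!
Write `v = μ̂ - μ`. Since `μ̂` is the projection of `μ + ξ` onto the convex set `K ∋ μ`, the
variational inequality gives `‖v‖² ≤ ⟨ξ, v⟩`. On each block, `v_{T_j}` lies in the cone `C_j`,
and the variational inequality for the projection `P_j` of `ξ_{T_j}` onto `C_j`, tested at `v_{T_j}`
and at `2 P_j`, gives `⟨ξ_{T_j}, v_{T_j}⟩ ≤ ⟨P_j, v_{T_j}⟩`. Hence
`‖v‖² ≤ 2⟨ξ, v⟩ - ‖v‖² ≤ Σ_j (2⟨P_j, v_{T_j}⟩ - ‖v_{T_j}‖²) ≤ Σ_j ‖P_j‖²`,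
the last step coordinatewise from `2ab - b² ≤ a²`.
-/

open Finset Function

section Projection

variable {ι : Type*} [Fintype ι] {S : Set (ι → ℝ)} {a p : ι → ℝ}

theorem sum_sub_mul_sub_nonpos_of_forall_sum_sq_le (hS : Convex ℝ S) (hp : p ∈ S)
    (hmin : ∀ z ∈ S, ∑ i, (a i - p i) ^ 2 ≤ ∑ i, (a i - z i) ^ 2) {q : ι → ℝ} (hq : q ∈ S) :
    ∑ i, (a i - p i) * (q i - p i) ≤ 0 := by
  set D := ∑ i, (a i - p i) * (q i - p i) with hD_def
  set N := ∑ i, (q i - p i) ^ 2 with hN_def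
  have hN : 0 ≤ N := sum_nonneg fun i _ => sq_nonneg _
  have hsegment : ∀ t ∈ Set.Icc (0 : ℝ) 1, 2 * t * D ≤ t ^ 2 * N := by
    intro t ht
    have hexpand : ∑ i, (a i - (p + t • (q - p)) i) ^ 2
        = ∑ i, (a i - p i) ^ 2 - 2 * t * D + t ^ 2 * N := by
      rw [hD_def, hN_def]
      simp only [mul_sum, ← sum_sub_distrib, ← sum_add_distrib]
      refine sum_congr rfl fun i _ => ?_
      simp only [Pi.add_apply, Pi.smul_apply, Pi.sub_apply, smul_eq_mul]
      ring
    linarith [hmin _ (hS.add_smul_sub_mem hp hq ht)]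
  by_contra! hD
  -- Test at `t = D / (D + N) ∈ (0, 1]`, for which `t * N = D - t * D < D`.
  have hDN : 0 < D + N := by linarith
  set t := D / (D + N)
  have ht : 0 < t := by positivity
  have htDN : t * (D + N) = D := div_mul_cancel₀ D hDN.ne'
  have h := hsegment t ⟨ht.le, (div_le_one hDN).2 (by linarith)⟩
  have h' : 2 * D ≤ t * N := le_of_mul_le_mul_left (by linarith) ht
  nlinarith

theorem sum_sq_sub_le_sum_mul_sub_of_forall_sum_sq_le (hS : Convex ℝ S) {x e : ι → ℝ}
    (hx : x ∈ S) (hp : p ∈ S)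
    (hmin : ∀ z ∈ S, ∑ i, (x i + e i - p i) ^ 2 ≤ ∑ i, (x i + e i - z i) ^ 2) :
    ∑ i, (p i - x i) ^ 2 ≤ ∑ i, e i * (p i - x i) := by
  have h := sum_sub_mul_sub_nonpos_of_forall_sum_sq_le (a := fun i => x i + e i) hS hp hmin hx
  have hrw : ∑ i, (x i + e i - p i) * (x i - p i)
      = ∑ i, (p i - x i) ^ 2 - ∑ i, e i * (p i - x i) := by
    rw [← sum_sub_distrib]; exact sum_congr rfl fun i _ => by ring
  linarith

theorem sum_mul_le_sum_mul_of_forall_sum_sq_le_of_cone (hS : Convex ℝ S)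
    (hcone : ∀ x ∈ S, ∀ c : ℝ, 0 ≤ c → c • x ∈ S) (hp : p ∈ S)
    (hmin : ∀ z ∈ S, ∑ i, (a i - p i) ^ 2 ≤ ∑ i, (a i - z i) ^ 2) {v : ι → ℝ} (hv : v ∈ S) :
    ∑ i, a i * v i ≤ ∑ i, p i * v i := by
  have hv' := sum_sub_mul_sub_nonpos_of_forall_sum_sq_le hS hp hmin hv
  have h2p := sum_sub_mul_sub_nonpos_of_forall_sum_sq_le hS hp hmin (hcone p hp 2 zero_le_two)
  have hrw : ∑ i, (a i - p i) * (v i - p i) + ∑ i, (a i - p i) * (((2 : ℝ) • p) i - p i)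
      = ∑ i, a i * v i - ∑ i, p i * v i := by
    simp only [← sum_add_distrib, ← sum_sub_distrib, Pi.smul_apply, smul_eq_mul]
    exact sum_congr rfl fun i _ => by ring
  linarith

end Projection

theorem Finset.sum_eq_sum_sum_subtype_of_partition {α κ M : Type*} [Fintype α] [Fintype κ]
    [AddCommMonoid M] {T : κ → Finset α} (hdisj : Pairwise (Disjoint on T))
    (hcover : ∀ i, ∃ j, i ∈ T j) (g : α → M) :
    ∑ i, g i = ∑ j, ∑ i : T j, g i := by
  classical
  have huniv : (univ : Finset α) = univ.biUnion T := by
    ext i; simpa using hcover i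
  rw [huniv, sum_biUnion fun j₁ _ j₂ _ h => hdisj h]
  exact sum_congr rfl fun j _ => (sum_coe_sort (T j) g).symm

theorem sum_two_mul_sub_sq_le_sum_sq {ι : Type*} [Fintype ι] {a p v : ι → ℝ}
    (h : ∑ i, a i * v i ≤ ∑ i, p i * v i) :
    ∑ i, (2 * (a i * v i) - v i ^ 2) ≤ ∑ i, p i ^ 2 :=
  calc ∑ i, (2 * (a i * v i) - v i ^ 2)
      = 2 * ∑ i, a i * v i - ∑ i, v i ^ 2 := by rw [sum_sub_distrib, mul_sum]
    _ ≤ 2 * ∑ i, p i * v i - ∑ i, v i ^ 2 := by gcongr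
    _ = ∑ i, (2 * (p i * v i) - v i ^ 2) := by rw [sum_sub_distrib, mul_sum]
    _ ≤ ∑ i, p i ^ 2 := sum_le_sum fun i _ => by linarith [two_mul_le_add_sq (p i) (v i)]

theorem stmt9_general (n m : ℕ) (K : Set (Fin n → ℝ))
    (hconv : Convex ℝ K)
    (μ ξ μhat : Fin n → ℝ) (hμ : μ ∈ K)
    (hproj : μhat ∈ K ∧ ∀ z ∈ K,
      ∑ i, (μ i + ξ i - μhat i) ^ 2 ≤ ∑ i, (μ i + ξ i - z i) ^ 2)
    (T : Fin m → Finset (Fin n))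
    (hdisj : ∀ j₁ j₂, j₁ ≠ j₂ → Disjoint (T j₁) (T j₂))
    (hcover : ∀ i, ∃ j, i ∈ T j)
    (C : ∀ j : Fin m, Set ({x // x ∈ T j} → ℝ))
    (hCconv : ∀ j, Convex ℝ (C j))
    (hCcone : ∀ j, ∀ x ∈ C j, ∀ c : ℝ, 0 ≤ c → c • x ∈ C j)
    (hmem : ∀ j, (fun i : {x // x ∈ T j} => μhat i.1 - μ i.1) ∈ C j)
    (P : ∀ j : Fin m, {x // x ∈ T j} → ℝ)
    (hP : ∀ j, P j ∈ C j ∧ ∀ z ∈ C j,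
      ∑ i, (ξ i.1 - P j i) ^ 2 ≤ ∑ i, (ξ i.1 - z i) ^ 2) :
    ∑ i, (μhat i - μ i) ^ 2 ≤ ∑ j, ∑ i, (P j i) ^ 2 := by
  have hK := sum_sq_sub_le_sum_mul_sub_of_forall_sum_sq_le hconv hμ hproj.1 hproj.2
  have hblock (j : Fin m) := sum_two_mul_sub_sq_le_sum_sq
    (sum_mul_le_sum_mul_of_forall_sum_sq_le_of_cone (a := fun i => ξ i.1) (hCconv j) (hCcone j)
      (hP j).1 (hP j).2 (hmem j))
  have hsplit := sum_eq_sum_sum_subtype_of_partition (fun j₁ j₂ h => hdisj j₁ j₂ h) hcover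
    fun i => 2 * (ξ i * (μhat i - μ i)) - (μhat i - μ i) ^ 2
  calc ∑ i, (μhat i - μ i) ^ 2
      ≤ ∑ i, (2 * (ξ i * (μhat i - μ i)) - (μhat i - μ i) ^ 2) := by
        rw [sum_sub_distrib, ← mul_sum]; linarith
    _ ≤ ∑ j, ∑ i, (P j i) ^ 2 := hsplit ▸ sum_le_sum fun j _ => hblock j

/-- Blockwise bound for the projection error: if `μ̂ = Π_K(μ + ξ)` with `μ ∈ K`,
`T₁,...,T_m` is a partition of the index set and `C_j` are closed convex cones
with `(μ̂ − μ)_{T_j} ∈ C_j`, then `‖μ̂ − μ‖² ≤ Σ_j ‖Π_{C_j}(ξ_{T_j})‖²`. -/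
theorem stmt9 (n m : ℕ) (K : Set (Fin n → ℝ)) (hcl : IsClosed K)
    (hconv : Convex ℝ K)
    (μ ξ μhat : Fin n → ℝ) (hμ : μ ∈ K)
    (hproj : μhat ∈ K ∧ ∀ z ∈ K,
      ∑ i, (μ i + ξ i - μhat i) ^ 2 ≤ ∑ i, (μ i + ξ i - z i) ^ 2)
    (T : Fin m → Finset (Fin n))
    (hdisj : ∀ j₁ j₂, j₁ ≠ j₂ → Disjoint (T j₁) (T j₂))
    (hcover : ∀ i, ∃ j, i ∈ T j)
    (C : ∀ j : Fin m, Set ({x // x ∈ T j} → ℝ))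
    (hCcl : ∀ j, IsClosed (C j)) (hCconv : ∀ j, Convex ℝ (C j))
    (hCne : ∀ j, (C j).Nonempty)
    (hCcone : ∀ j, ∀ x ∈ C j, ∀ c : ℝ, 0 ≤ c → c • x ∈ C j)
    (hmem : ∀ j, (fun i : {x // x ∈ T j} => μhat i.1 - μ i.1) ∈ C j)
    (P : ∀ j : Fin m, {x // x ∈ T j} → ℝ)
    (hP : ∀ j, P j ∈ C j ∧ ∀ z ∈ C j,
      ∑ i, (ξ i.1 - P j i) ^ 2 ≤ ∑ i, (ξ i.1 - z i) ^ 2) :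
    ∑ i, (μhat i - μ i) ^ 2 ≤ ∑ j, ∑ i, (P j i) ^ 2 :=
  stmt9_general n m K hconv μ ξ μhat hμ hproj T hdisj hcover C hCconv hCcone hmem P hP
end

section
/- Let C ⊆ ℝᵐ be a closed convex cone whose lineality space contains a vector w (i.e., w ∈ C and −w ∈ C). Then for all y ∈ ℝᵐ and all c ∈ ℝ, Π_C(y + cw) = Π_C(y) + cw. -/
/-! Translating by an element `v` of the lineality space maps the cone onto itself isometrically,
so it carries the nearest point to `y` to a nearest point to `y + v`; nearest points in a convex
set are unique. -/

section NearestPoint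

variable {F : Type*} [NormedAddCommGroup F]

def IsNearestPoint (K : Set F) (x p : F) : Prop :=
  p ∈ K ∧ ∀ z ∈ K, ‖x - p‖ ≤ ‖x - z‖

theorem IsNearestPoint.add {K : Set F} {x p v : F} (h : IsNearestPoint K x p)
    (hadd : ∀ z ∈ K, z + v ∈ K) (hsub : ∀ z ∈ K, z - v ∈ K) :
    IsNearestPoint K (x + v) (p + v) := by
  refine ⟨hadd p h.1, fun z hz => ?_⟩
  calc ‖x + v - (p + v)‖ = ‖x - p‖ := by rw [add_sub_add_right_eq_sub]
    _ ≤ ‖x - (z - v)‖ := h.2 _ (hsub z hz)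
    _ = ‖x + v - z‖ := by rw [sub_sub_eq_add_sub]

/-- The midpoint of two nearest points is no nearer, which by the parallelogram law forces
them to coincide. -/
theorem IsNearestPoint.eq [InnerProductSpace ℝ F] {K : Set F} (hK : Convex ℝ K) {x a b : F}
    (ha : IsNearestPoint K x a) (hb : IsNearestPoint K x b) : a = b := by
  have hab : ‖x - a‖ = ‖x - b‖ := le_antisymm (ha.2 b hb.1) (hb.2 a ha.1)
  have hmid : ‖x - a‖ ≤ ‖x - ((1 / 2 : ℝ) • a + (1 / 2 : ℝ) • b)‖ :=
    ha.2 _ (hK ha.1 hb.1 (by norm_num) (by norm_num) (by norm_num))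
  have hpar := parallelogram_law_with_norm ℝ (x - a) (x - b)
  have hsum : x - a + (x - b) = (2 : ℝ) • (x - ((1 / 2 : ℝ) • a + (1 / 2 : ℝ) • b)) := by
    module
  rw [hsum, sub_sub_sub_cancel_left, norm_smul, Real.norm_ofNat] at hpar
  have : ‖b - a‖ = 0 := by
    nlinarith [norm_nonneg (b - a), norm_nonneg (x - a)]
  exact (sub_eq_zero.mp (norm_eq_zero.mp this)).symm

end NearestPoint

section Cone

variable {E : Type*} [AddCommGroup E] [Module ℝ E] {K : Set E}

theorem Convex.add_mem_of_smul_mem (hK : Convex ℝ K) (hcone : ∀ x ∈ K, ∀ c : ℝ, 0 ≤ c → c • x ∈ K)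
    {a b : E} (ha : a ∈ K) (hb : b ∈ K) : a + b ∈ K := by
  have hmid := hcone _ (hK ha hb (by norm_num : (0 : ℝ) ≤ 1 / 2) (by norm_num : (0 : ℝ) ≤ 1 / 2)
    (by norm_num)) 2 (by norm_num)
  rwa [smul_add, smul_smul, smul_smul, show (2 : ℝ) * (1 / 2) = 1 by norm_num, one_smul,
    one_smul] at hmid

theorem smul_mem_of_neg_mem (hcone : ∀ x ∈ K, ∀ c : ℝ, 0 ≤ c → c • x ∈ K) {w : E} (hw : w ∈ K)
    (hw' : -w ∈ K) (t : ℝ) : t • w ∈ K := by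
  rcases le_total 0 t with ht | ht
  · exact hcone w hw t ht
  · simpa using hcone (-w) hw' (-t) (neg_nonneg.mpr ht)

end Cone

theorem stmt13_general (m : ℕ) (C : Set (EuclideanSpace ℝ (Fin m)))
    (hconv : Convex ℝ C)
    (hcone : ∀ x ∈ C, ∀ c : ℝ, 0 ≤ c → c • x ∈ C)
    (w : EuclideanSpace ℝ (Fin m)) (hw : w ∈ C) (hw' : -w ∈ C)
    (y : EuclideanSpace ℝ (Fin m)) (c : ℝ)
    (p q : EuclideanSpace ℝ (Fin m))
    (hp : p ∈ C ∧ ∀ z ∈ C, ‖y - p‖ ≤ ‖y - z‖)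
    (hq : q ∈ C ∧ ∀ z ∈ C, ‖y + c • w - q‖ ≤ ‖y + c • w - z‖) :
    q = p + c • w := by
  have hcw : c • w ∈ C := smul_mem_of_neg_mem hcone hw hw' c
  have hcw' : -(c • w) ∈ C := by simpa using smul_mem_of_neg_mem hcone hw hw' (-c)
  have hp' : IsNearestPoint C (y + c • w) (p + c • w) :=
    IsNearestPoint.add hp (fun z hz => hconv.add_mem_of_smul_mem hcone hz hcw)
      (fun z hz => by simpa [sub_eq_add_neg] using hconv.add_mem_of_smul_mem hcone hz hcw')
  exact IsNearestPoint.eq hconv hq hp'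

/-- Translation equivariance of the conic projection along the lineality
space: if `w ∈ C` and `−w ∈ C`, then `Π_C(y + cw) = Π_C(y) + cw`. -/
theorem stmt13 (m : ℕ) (C : Set (EuclideanSpace ℝ (Fin m)))
    (hcl : IsClosed C) (hconv : Convex ℝ C)
    (hcone : ∀ x ∈ C, ∀ c : ℝ, 0 ≤ c → c • x ∈ C)
    (w : EuclideanSpace ℝ (Fin m)) (hw : w ∈ C) (hw' : -w ∈ C)
    (y : EuclideanSpace ℝ (Fin m)) (c : ℝ)
    (p q : EuclideanSpace ℝ (Fin m))
    (hp : p ∈ C ∧ ∀ z ∈ C, ‖y - p‖ ≤ ‖y - z‖)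
    (hq : q ∈ C ∧ ∀ z ∈ C, ‖y + c • w - q‖ ≤ ‖y + c • w - z‖) :
    q = p + c • w :=
  stmt13_general m C hconv hcone w hw hw' y c p q hp hq
end

section
/- Let μ ∈ 𝒮ₙ∪ be a convex sequence which is affine on each block of a partition (T₁,...,T_q) of {1,...,n} into consecutive intervals. Then the tangent cone of 𝒮ₙ∪ at μ satisfies T_μ ⊆ 𝒮∪_{|T₁|} × ... × 𝒮∪_{|T_q|}, i.e., for every v ∈ T_μ and every j, the restriction v_{T_j} is a convex sequence in ℝ^{|T_j|}. -/
/-!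
The second difference `w ↦ w (i+1) + w (i-1) - 2 w i` at an interior index of a block is a
continuous linear functional which is nonnegative on convex sequences and vanishes at `μ`, since
`μ` is affine on the block. Hence it is nonnegative on every `t • (u - μ)` and, being continuous,
on the closure of these vectors, which is the tangent cone.
-/

/-- `u` is a convex sequence: `2uᵢ ≤ u_{i+1} + u_{i−1}` for interior indices. -/
def IsConvexSeq {n : ℕ} (u : Fin n → ℝ) : Prop :=
  ∀ i : ℕ, ∀ (h1 : 0 < i) (h2 : i + 1 < n),
    2 * u ⟨i, Nat.lt_of_succ_lt h2⟩ ≤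
      u ⟨i + 1, h2⟩ + u ⟨i - 1, Nat.lt_of_le_of_lt (Nat.sub_le _ _) (Nat.lt_of_succ_lt h2)⟩

open Set

theorem ContinuousLinearMap.nonneg_of_mem_closure_cone_of_isMinOn {E : Type*} [AddCommGroup E]
    [Module ℝ E] [TopologicalSpace E] (ℓ : E →L[ℝ] ℝ) {S : Set E} {μ : E} (hμ : IsMinOn ℓ S μ)
    {v : E} (hv : v ∈ closure {w | ∃ t : ℝ, 0 ≤ t ∧ ∃ u ∈ S, w = t • (u - μ)}) : 0 ≤ ℓ v := by
  have hcone : {w | ∃ t : ℝ, 0 ≤ t ∧ ∃ u ∈ S, w = t • (u - μ)} ⊆ ℓ ⁻¹' Ici 0 := by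
    rintro _ ⟨t, ht, u, hu, rfl⟩
    simpa only [mem_preimage, mem_Ici, map_smul, map_sub, smul_eq_mul] using
      mul_nonneg ht (sub_nonneg.mpr (isMinOn_iff.mp hμ u hu))
  exact closure_minimal hcone (isClosed_Ici.preimage ℓ.continuous) hv

theorem stmt18_general (n q : ℕ) (T : Fin q → Finset (Fin n))
    (μ : Fin n → ℝ)
    (haff : ∀ j, ∀ i : ℕ, ∀ (h1 : 0 < i) (h2 : i + 1 < n),
      (⟨i - 1, Nat.lt_of_le_of_lt (Nat.sub_le _ _) (Nat.lt_of_succ_lt h2)⟩ : Fin n) ∈ T j →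
      (⟨i, Nat.lt_of_succ_lt h2⟩ : Fin n) ∈ T j →
      (⟨i + 1, h2⟩ : Fin n) ∈ T j →
      2 * μ ⟨i, Nat.lt_of_succ_lt h2⟩ =
        μ ⟨i + 1, h2⟩ + μ ⟨i - 1, Nat.lt_of_le_of_lt (Nat.sub_le _ _) (Nat.lt_of_succ_lt h2)⟩)
    (v : Fin n → ℝ)
    (hv : v ∈ closure {w : Fin n → ℝ |
      ∃ t : ℝ, 0 ≤ t ∧ ∃ u : Fin n → ℝ, IsConvexSeq u ∧ w = t • (u - μ)}) :
    ∀ j, ∀ i : ℕ, ∀ (h1 : 0 < i) (h2 : i + 1 < n),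
      (⟨i - 1, Nat.lt_of_le_of_lt (Nat.sub_le _ _) (Nat.lt_of_succ_lt h2)⟩ : Fin n) ∈ T j →
      (⟨i, Nat.lt_of_succ_lt h2⟩ : Fin n) ∈ T j →
      (⟨i + 1, h2⟩ : Fin n) ∈ T j →
      2 * v ⟨i, Nat.lt_of_succ_lt h2⟩ ≤
        v ⟨i + 1, h2⟩ + v ⟨i - 1, Nat.lt_of_le_of_lt (Nat.sub_le _ _) (Nat.lt_of_succ_lt h2)⟩ := by
  intro j i h1 h2 hprev hmid hnext
  set prev : Fin n := ⟨i - 1, by omega⟩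
  set mid : Fin n := ⟨i, by omega⟩
  set next : Fin n := ⟨i + 1, h2⟩
  set secondDiff : (Fin n → ℝ) →L[ℝ] ℝ :=
    .proj next + .proj prev - (2 : ℝ) • .proj mid
  have secondDiff_apply : ∀ w, secondDiff w = w next + w prev - 2 * w mid := fun _ => rfl
  have hmin : IsMinOn secondDiff {u | IsConvexSeq u} μ := isMinOn_iff.mpr fun u hu => by
    rw [secondDiff_apply, secondDiff_apply]
    linarith [hu i h1 h2, haff j i h1 h2 hprev hmid hnext]
  have hv_nonneg := secondDiff.nonneg_of_mem_closure_cone_of_isMinOn hmin hv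
  rw [secondDiff_apply] at hv_nonneg
  linarith

/-- If the convex sequence `μ` is affine on each block of a partition of the
index set into consecutive intervals, then every element of the tangent cone
of the cone of convex sequences at `μ` restricts to a convex sequence on each
block. -/
theorem stmt18 (n q : ℕ) (T : Fin q → Finset (Fin n))
    (hdisj : ∀ j₁ j₂, j₁ ≠ j₂ → Disjoint (T j₁) (T j₂))
    (hcover : ∀ i, ∃ j, i ∈ T j)
    (hint : ∀ j, ∀ i₁ ∈ T j, ∀ i₂ ∈ T j, ∀ i : Fin n, i₁ ≤ i → i ≤ i₂ → i ∈ T j)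
    (μ : Fin n → ℝ) (hμ : IsConvexSeq μ)
    (haff : ∀ j, ∀ i : ℕ, ∀ (h1 : 0 < i) (h2 : i + 1 < n),
      (⟨i - 1, Nat.lt_of_le_of_lt (Nat.sub_le _ _) (Nat.lt_of_succ_lt h2)⟩ : Fin n) ∈ T j →
      (⟨i, Nat.lt_of_succ_lt h2⟩ : Fin n) ∈ T j →
      (⟨i + 1, h2⟩ : Fin n) ∈ T j →
      2 * μ ⟨i, Nat.lt_of_succ_lt h2⟩ =
        μ ⟨i + 1, h2⟩ + μ ⟨i - 1, Nat.lt_of_le_of_lt (Nat.sub_le _ _) (Nat.lt_of_succ_lt h2)⟩)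
    (v : Fin n → ℝ)
    (hv : v ∈ closure {w : Fin n → ℝ |
      ∃ t : ℝ, 0 ≤ t ∧ ∃ u : Fin n → ℝ, IsConvexSeq u ∧ w = t • (u - μ)}) :
    ∀ j, ∀ i : ℕ, ∀ (h1 : 0 < i) (h2 : i + 1 < n),
      (⟨i - 1, Nat.lt_of_le_of_lt (Nat.sub_le _ _) (Nat.lt_of_succ_lt h2)⟩ : Fin n) ∈ T j →
      (⟨i, Nat.lt_of_succ_lt h2⟩ : Fin n) ∈ T j →
      (⟨i + 1, h2⟩ : Fin n) ∈ T j →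
      2 * v ⟨i, Nat.lt_of_succ_lt h2⟩ ≤
        v ⟨i + 1, h2⟩ + v ⟨i - 1, Nat.lt_of_le_of_lt (Nat.sub_le _ _) (Nat.lt_of_succ_lt h2)⟩ :=
  stmt18_general n q T μ haff v hv
end
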